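/- arXiv:1906.03550 — 2 statements merged into one kernel-verified Lean document; each statement's English description precedes it below -/
import Mathlib

section
/- Let H be the graph on all labeled n-vertex graphs with exactly M edges where adjacency is given by swapping an edge with a non-edge, equipped with the uniform lazy random walk m_G(G') = 1/(M(C(n,2)-M)+1) on closed neighborhoods. Then for every pair of adjacent G₁, G₂ in H, the Ricci curvature satisfies κ(G₁, G₂) ≥ C(n,2)/(M(C(n,2)-M)+1). -/
/-!
Write `G₂ = G₁ - e₁ + e₂` and `C = C(n,2)`. Exchanging the roles of the pairs `e₁` and `e₂` is an
automorphism of the exchange graph carrying `G₁` to `G₂`, hence carrying `m_{G₁}` to `m_{G₂}`;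
composed with the transposition of `G₁` and `G₂` it still does, and now fixes both. Every graph
moves by at most one step, and a neighbour `G₁ - a + b` moves only if `a ≠ e₁` and `b ≠ e₂`, so
at most `(M - 1)(C - M - 1) = M(C - M) + 1 - C` points of mass `1/(M(C - M) + 1)` move. This
bounds the transport cost by `1 - C/(M(C - M) + 1)`.
-/

open Finset

/-- A probability vector on a finite set. -/
def IsProbVec {V : Type*} [Fintype V] (m : V → ℝ) : Prop :=
  (∀ x, 0 ≤ m x) ∧ ∑ x, m x = 1

/-- A coupling between two probability vectors. -/
def IsCoupling {V : Type*} [Fintype V] (m₁ m₂ : V → ℝ) (A : V → V → ℝ) : Prop :=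
  (∀ x y, 0 ≤ A x y) ∧ (∀ x, ∑ y, A x y = m₁ x) ∧ (∀ y, ∑ x, A x y = m₂ y)

/-- The L¹-Wasserstein (transportation) distance between two probability vectors,
with respect to the graph metric. -/
noncomputable def Wdist {V : Type*} [Fintype V] (G : SimpleGraph V) (m₁ m₂ : V → ℝ) : ℝ :=
  sInf {s | ∃ A : V → V → ℝ, IsCoupling m₁ m₂ A ∧
    s = ∑ x, ∑ y, A x y * (G.dist x y : ℝ)}

/-- A random walk on a graph: at each vertex a probability measure supported on
the closed neighborhood. -/
def IsRandomWalk {V : Type*} [Fintype V] (G : SimpleGraph V) (m : V → V → ℝ) : Prop :=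
  ∀ x, IsProbVec (m x) ∧ ∀ y, m x y ≠ 0 → y = x ∨ G.Adj x y

/-- Ollivier's Ricci curvature `κ(x,y) = 1 - W(m_x, m_y)/d(x,y)`. -/
noncomputable def ricci {V : Type*} [Fintype V] (G : SimpleGraph V) (m : V → V → ℝ)
    (x y : V) : ℝ :=
  1 - Wdist G (m x) (m y) / (G.dist x y : ℝ)

/-- The averaging operator `(Mf)(x) = ∑_y f(y)·m_x(y)`. -/
def Mop {V : Type*} [Fintype V] (m : V → V → ℝ) (f : V → ℝ) : V → ℝ :=
  fun x => ∑ y, f y * m x y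
/-- Labeled graphs on `n` vertices with exactly `M` edges, encoded as `M`-element sets
of non-diagonal unordered vertex pairs. -/
def GraphM (n M : ℕ) :=
  {E : Finset (Sym2 (Fin n)) // (∀ e ∈ E, ¬ e.IsDiag) ∧ E.card = M}

instance (n M : ℕ) : Fintype (GraphM n M) := by unfold GraphM; infer_instance
instance (n M : ℕ) : DecidableEq (GraphM n M) := by unfold GraphM; infer_instance

/-- The exchange graph `H` on `GraphM n M`: two graphs are adjacent iff one is obtained
from the other by swapping an edge with a non-edge. -/
def exchangeGraph (n M : ℕ) : SimpleGraph (GraphM n M) where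
  Adj G₁ G₂ := (G₁.val \ G₂.val).card = 1 ∧ (G₂.val \ G₁.val).card = 1
  symm := ⟨fun _ _ h => ⟨h.2, h.1⟩⟩
  loopless := ⟨fun G h => by simp at h⟩

instance (n M : ℕ) : DecidableRel (exchangeGraph n M).Adj := fun _ _ => instDecidableAnd

/-- The lazy uniform random walk on `exchangeGraph n M`, uniform on closed
neighborhoods with mass `1/(M(C(n,2)-M)+1)`. -/
noncomputable def exchangeWalk (n M : ℕ) : GraphM n M → GraphM n M → ℝ :=
  fun G G' =>
    if G = G' ∨ (exchangeGraph n M).Adj G G' then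
      1 / ((M * (n.choose 2 - M) : ℕ) + 1 : ℝ)
    else 0

section Wasserstein

variable {V : Type*} [Fintype V]

lemma Wdist_le_of_isCoupling (G : SimpleGraph V) {m₁ m₂ : V → ℝ} {A : V → V → ℝ}
    (hA : IsCoupling m₁ m₂ A) : Wdist G m₁ m₂ ≤ ∑ x, ∑ y, A x y * (G.dist x y : ℝ) :=
  csInf_le ⟨0, by
    rintro _ ⟨B, hB, rfl⟩
    exact sum_nonneg fun x _ => sum_nonneg fun y _ => mul_nonneg (hB.1 x y) (Nat.cast_nonneg _)⟩
    ⟨A, hA, rfl⟩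

lemma ricci_eq_of_adj (G : SimpleGraph V) (m : V → V → ℝ) {x y : V} (h : G.Adj x y) :
    ricci G m x y = 1 - Wdist G (m x) (m y) := by
  simp [ricci, SimpleGraph.dist_eq_one_iff_adj.mpr h]

variable [DecidableEq V]

lemma isCoupling_of_perm {m₁ m₂ : V → ℝ} (hm₁ : ∀ x, 0 ≤ m₁ x) (σ : Equiv.Perm V)
    (hσ : ∀ x, m₂ (σ x) = m₁ x) :
    IsCoupling m₁ m₂ (fun x y => if y = σ x then m₁ x else 0) := by
  refine ⟨fun x y => ite_nonneg (hm₁ x) le_rfl, fun x => by simp, fun y => ?_⟩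
  simp_rw [← Equiv.symm_apply_eq (e := σ), eq_comm (a := σ.symm y)]
  simp [← hσ]

lemma Wdist_le_sum_moved (G : SimpleGraph V) {m₁ m₂ : V → ℝ} (hm₁ : ∀ x, 0 ≤ m₁ x)
    (σ : Equiv.Perm V) (hσ : ∀ x, m₂ (σ x) = m₁ x) (hσG : ∀ x, σ x = x ∨ G.Adj x (σ x)) :
    Wdist G m₁ m₂ ≤ ∑ x with σ x ≠ x, m₁ x := by
  refine (Wdist_le_of_isCoupling G (isCoupling_of_perm hm₁ σ hσ)).trans ?_
  rw [sum_filter]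
  refine sum_le_sum fun x _ => ?_
  simp only [ite_mul, zero_mul, sum_ite_eq', mem_univ, if_true]
  rcases hσG x with h | h
  · simp [h]
  · simp [h.ne', SimpleGraph.dist_eq_one_iff_adj.mpr h]

end Wasserstein

section SwapFinset

variable {α : Type*} [DecidableEq α] {s : Finset α} {a b : α}

lemma Finset.map_swap_of_iff (h : a ∈ s ↔ b ∈ s) : s.map (Equiv.swap a b).toEmbedding = s := by
  ext x
  rw [mem_map_equiv, Equiv.symm_swap, Equiv.swap_apply_def]
  split_ifs with h₁ h₂ <;> grind

lemma Finset.map_swap_of_mem_of_notMem (ha : a ∈ s) (hb : b ∉ s) :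
    s.map (Equiv.swap a b).toEmbedding = insert b (s.erase a) := by
  ext x
  rw [mem_map_equiv, Equiv.symm_swap, Equiv.swap_apply_def]
  split_ifs with h₁ h₂ <;> grind

lemma Sym2.isDiag_swap_iff {e₁ e₂ : Sym2 α} (h₁ : ¬e₁.IsDiag) (h₂ : ¬e₂.IsDiag) (e : Sym2 α) :
    (Equiv.swap e₁ e₂ e).IsDiag ↔ e.IsDiag := by
  rw [Equiv.swap_apply_def]
  split_ifs with h h' <;> simp_all

end SwapFinset

namespace GraphM

variable {n M : ℕ}

lemma exchangeGraph_adj_of_eq_insert_erase {X Y : GraphM n M} {a b : Sym2 (Fin n)}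
    (ha : a ∈ X.val) (hb : b ∉ X.val) (hY : Y.val = insert b (X.val.erase a)) :
    (exchangeGraph n M).Adj X Y := by
  have hXY : X.val \ Y.val = {a} := by ext; grind
  have hcard : (X.val \ Y.val).card = 1 := by rw [hXY, card_singleton]
  exact ⟨hcard, card_sdiff_comm (X.2.2.trans Y.2.2.symm) ▸ hcard⟩

lemma exists_eq_insert_erase_of_adj {X Y : GraphM n M} (h : (exchangeGraph n M).Adj X Y) :
    ∃ a ∈ X.val, ∃ b ∉ X.val, Y.val = insert b (X.val.erase a) := by
  obtain ⟨a, ha⟩ := card_eq_one.mp h.1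
  obtain ⟨b, hb⟩ := card_eq_one.mp h.2
  have hXY : ∀ x, x ∈ X.val ∧ x ∉ Y.val ↔ x = a := fun x => by rw [← mem_sdiff, ha, mem_singleton]
  have hYX : ∀ x, x ∈ Y.val ∧ x ∉ X.val ↔ x = b := fun x => by rw [← mem_sdiff, hb, mem_singleton]
  refine ⟨a, ((hXY a).2 rfl).1, b, ((hYX b).2 rfl).2, ?_⟩
  ext x
  grind

def relabel (π : Equiv.Perm (Sym2 (Fin n))) (hπ : ∀ e, (π e).IsDiag ↔ e.IsDiag) :
    exchangeGraph n M ≃g exchangeGraph n M where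
  toFun X := ⟨X.val.map π.toEmbedding, fun _ hx => by
    obtain ⟨e, he, rfl⟩ := mem_map.mp hx
    exact (hπ e).not.2 (X.2.1 e he), by simp [X.2.2]⟩
  invFun X := ⟨X.val.map π.symm.toEmbedding, fun _ hx => by
    obtain ⟨e, he, rfl⟩ := mem_map.mp hx
    rw [← hπ, Equiv.coe_toEmbedding, Equiv.apply_symm_apply]
    exact X.2.1 e he, by simp [X.2.2]⟩
  left_inv X := Subtype.ext (by simp [map_map])
  right_inv X := Subtype.ext (by simp [map_map])
  map_rel_iff' {X Y} := by
    change #(X.val.map _ \ Y.val.map _) = 1 ∧ #(Y.val.map _ \ X.val.map _) = 1 ↔ _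
    simp only [← Finset.map_sdiff, card_map]
    rfl

@[simp]
lemma relabel_val (π : Equiv.Perm (Sym2 (Fin n))) (hπ : ∀ e, (π e).IsDiag ↔ e.IsDiag)
    (X : GraphM n M) : (relabel π hπ X).val = X.val.map π.toEmbedding := rfl

lemma exchangeWalk_iso_apply (φ : exchangeGraph n M ≃g exchangeGraph n M) (G X : GraphM n M) :
    exchangeWalk n M (φ G) (φ X) = exchangeWalk n M G X := by
  simp only [exchangeWalk, φ.map_adj_iff, φ.injective.eq_iff]

lemma exchangeWalk_nonneg (G X : GraphM n M) : 0 ≤ exchangeWalk n M G X := by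
  unfold exchangeWalk
  split_ifs <;> positivity

section SwapEdges

variable {e₁ e₂ : Sym2 (Fin n)} (h₁ : ¬e₁.IsDiag) (h₂ : ¬e₂.IsDiag)

def swapEdges : exchangeGraph n M ≃g exchangeGraph n M :=
  relabel (Equiv.swap e₁ e₂) (Sym2.isDiag_swap_iff h₁ h₂)

lemma swapEdges_of_iff {X : GraphM n M} (h : e₁ ∈ X.val ↔ e₂ ∈ X.val) : swapEdges h₁ h₂ X = X :=
  Subtype.ext (Finset.map_swap_of_iff h)

lemma swapEdges_val_of_mem_of_notMem {X : GraphM n M} (h₁X : e₁ ∈ X.val) (h₂X : e₂ ∉ X.val) :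
    (swapEdges h₁ h₂ X).val = insert e₂ (X.val.erase e₁) :=
  Finset.map_swap_of_mem_of_notMem h₁X h₂X

lemma swapEdges_swapEdges (X : GraphM n M) : swapEdges h₁ h₂ (swapEdges h₁ h₂ X) = X :=
  Subtype.ext <| by
    ext
    simp only [swapEdges, relabel_val, mem_map_equiv, Equiv.symm_swap, Equiv.swap_apply_self]

lemma swapEdges_eq_or_adj (X : GraphM n M) :
    swapEdges h₁ h₂ X = X ∨ (exchangeGraph n M).Adj X (swapEdges h₁ h₂ X) := by
  by_cases h : e₁ ∈ X.val ↔ e₂ ∈ X.val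
  · exact .inl (swapEdges_of_iff h₁ h₂ h)
  right
  by_cases h₁X : e₁ ∈ X.val
  · exact exchangeGraph_adj_of_eq_insert_erase h₁X (by tauto)
      (swapEdges_val_of_mem_of_notMem h₁ h₂ h₁X (by tauto))
  · refine exchangeGraph_adj_of_eq_insert_erase (a := e₂) (by tauto) h₁X ?_
    simpa [swapEdges, Equiv.swap_comm e₁ e₂] using
      Finset.map_swap_of_mem_of_notMem (a := e₂) (by tauto) h₁X

/-- `G₁` and `G₂` lie in both closed neighbourhoods, so they stay put instead of being
exchanged. -/
def transportPerm (G₁ G₂ : GraphM n M) (h₁ : ¬e₁.IsDiag) (h₂ : ¬e₂.IsDiag) :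
    Equiv.Perm (GraphM n M) :=
  (swapEdges h₁ h₂).toEquiv.trans (Equiv.swap G₁ G₂)

variable {G₁ G₂ : GraphM n M}

lemma swapEdges_left (he₁ : e₁ ∈ G₁.val) (he₂ : e₂ ∉ G₁.val)
    (hG₂ : G₂.val = insert e₂ (G₁.val.erase e₁)) : swapEdges h₁ h₂ G₁ = G₂ :=
  Subtype.ext ((swapEdges_val_of_mem_of_notMem h₁ h₂ he₁ he₂).trans hG₂.symm)

lemma swapEdges_right (he₁ : e₁ ∈ G₁.val) (he₂ : e₂ ∉ G₁.val)
    (hG₂ : G₂.val = insert e₂ (G₁.val.erase e₁)) : swapEdges h₁ h₂ G₂ = G₁ := by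
  rw [← swapEdges_left h₁ h₂ he₁ he₂ hG₂, swapEdges_swapEdges]

lemma transportPerm_apply_left (he₁ : e₁ ∈ G₁.val) (he₂ : e₂ ∉ G₁.val)
    (hG₂ : G₂.val = insert e₂ (G₁.val.erase e₁)) : transportPerm G₁ G₂ h₁ h₂ G₁ = G₁ := by
  simp [transportPerm, swapEdges_left h₁ h₂ he₁ he₂ hG₂]

lemma transportPerm_apply_right (he₁ : e₁ ∈ G₁.val) (he₂ : e₂ ∉ G₁.val)
    (hG₂ : G₂.val = insert e₂ (G₁.val.erase e₁)) : transportPerm G₁ G₂ h₁ h₂ G₂ = G₂ := by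
  simp [transportPerm, swapEdges_right h₁ h₂ he₁ he₂ hG₂]

lemma transportPerm_apply_of_ne (he₁ : e₁ ∈ G₁.val) (he₂ : e₂ ∉ G₁.val)
    (hG₂ : G₂.val = insert e₂ (G₁.val.erase e₁)) {X : GraphM n M} (hX₁ : X ≠ G₁)
    (hX₂ : X ≠ G₂) : transportPerm G₁ G₂ h₁ h₂ X = swapEdges h₁ h₂ X := by
  refine Equiv.swap_apply_of_ne_of_ne ?_ ?_
  · rw [← swapEdges_right h₁ h₂ he₁ he₂ hG₂]
    exact (swapEdges h₁ h₂).injective.ne hX₂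
  · rw [← swapEdges_left h₁ h₂ he₁ he₂ hG₂]
    exact (swapEdges h₁ h₂).injective.ne hX₁

lemma transportPerm_eq_or_adj (he₁ : e₁ ∈ G₁.val) (he₂ : e₂ ∉ G₁.val)
    (hG₂ : G₂.val = insert e₂ (G₁.val.erase e₁)) (X : GraphM n M) :
    transportPerm G₁ G₂ h₁ h₂ X = X ∨ (exchangeGraph n M).Adj X (transportPerm G₁ G₂ h₁ h₂ X) := by
  obtain rfl | hX₁ := eq_or_ne X G₁
  · exact .inl (transportPerm_apply_left h₁ h₂ he₁ he₂ hG₂)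
  obtain rfl | hX₂ := eq_or_ne X G₂
  · exact .inl (transportPerm_apply_right h₁ h₂ he₁ he₂ hG₂)
  rw [transportPerm_apply_of_ne h₁ h₂ he₁ he₂ hG₂ hX₁ hX₂]
  exact swapEdges_eq_or_adj h₁ h₂ X

lemma exchangeWalk_transportPerm (he₁ : e₁ ∈ G₁.val) (he₂ : e₂ ∉ G₁.val)
    (hG₂ : G₂.val = insert e₂ (G₁.val.erase e₁)) (X : GraphM n M) :
    exchangeWalk n M G₂ (transportPerm G₁ G₂ h₁ h₂ X) = exchangeWalk n M G₁ X := by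
  have hG₁G₂ : exchangeWalk n M G₂ G₁ = exchangeWalk n M G₂ G₂ := by
    simp [exchangeWalk, (exchangeGraph_adj_of_eq_insert_erase he₁ he₂ hG₂).symm]
  rw [transportPerm, Equiv.trans_apply, Equiv.apply_swap_eq_self hG₁G₂,
    ← swapEdges_left h₁ h₂ he₁ he₂ hG₂]
  exact exchangeWalk_iso_apply _ G₁ X

lemma exists_eq_insert_erase_of_transportPerm_ne (he₁ : e₁ ∈ G₁.val) (he₂ : e₂ ∉ G₁.val)
    (hG₂ : G₂.val = insert e₂ (G₁.val.erase e₁)) {X : GraphM n M}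
    (hX : G₁ = X ∨ (exchangeGraph n M).Adj G₁ X) (hσX : transportPerm G₁ G₂ h₁ h₂ X ≠ X) :
    ∃ a ∈ G₁.val.erase e₁, ∃ b ∈ (({e | ¬e.IsDiag} : Finset _) \ G₁.val).erase e₂,
      X.val = insert b (G₁.val.erase a) := by
  have hX₁ : X ≠ G₁ := by
    rintro rfl
    exact hσX (transportPerm_apply_left h₁ h₂ he₁ he₂ hG₂)
  have hX₂ : X ≠ G₂ := by
    rintro rfl
    exact hσX (transportPerm_apply_right h₁ h₂ he₁ he₂ hG₂)
  obtain ⟨a, ha, b, hb, hXab⟩ := exists_eq_insert_erase_of_adj (hX.resolve_left hX₁.symm)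
  have hmoved : ¬(e₁ ∈ X.val ↔ e₂ ∈ X.val) := fun h => hσX <| by
    rw [transportPerm_apply_of_ne h₁ h₂ he₁ he₂ hG₂ hX₁ hX₂, swapEdges_of_iff h₁ h₂ h]
  have hXG₂ : X.val ≠ G₂.val := fun h => hX₂ (Subtype.ext h)
  rw [hXab] at hmoved hXG₂
  rw [hG₂] at hXG₂
  -- `a = e₁` or `b = e₂` would force `X = G₂` or `e₁ ∈ X ↔ e₂ ∈ X`
  have hab : a ≠ e₁ ∧ b ≠ e₂ := by grind
  refine ⟨a, mem_erase.2 ⟨hab.1, ha⟩, b, mem_erase.2 ⟨hab.2, mem_sdiff.2 ⟨?_, hb⟩⟩, hXab⟩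
  exact mem_filter.2 ⟨mem_univ _, X.2.1 b (by simp [hXab])⟩

lemma card_moved_add_choose_le (he₁ : e₁ ∈ G₁.val) (he₂ : e₂ ∉ G₁.val)
    (hG₂ : G₂.val = insert e₂ (G₁.val.erase e₁)) :
    #{X | transportPerm G₁ G₂ h₁ h₂ X ≠ X ∧ (G₁ = X ∨ (exchangeGraph n M).Adj G₁ X)} +
      n.choose 2 ≤ M * (n.choose 2 - M) + 1 := by
  set moved : Finset (GraphM n M) :=
    {X | transportPerm G₁ G₂ h₁ h₂ X ≠ X ∧ (G₁ = X ∨ (exchangeGraph n M).Adj G₁ X)}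
  set pairs : Finset (Sym2 (Fin n)) := {e | ¬e.IsDiag}
  set nonEdges := pairs \ G₁.val
  have hG₁ : G₁.val ⊆ pairs := fun e he => mem_filter.2 ⟨mem_univ _, G₁.2.1 e he⟩
  have hchoose : #nonEdges + M = n.choose 2 := by
    rw [← G₁.2.2, card_sdiff_add_card_eq_card hG₁, ← Fintype.card_subtype,
      Sym2.card_subtype_not_diag, Fintype.card_fin]
  have he₂' : e₂ ∈ nonEdges :=
    mem_sdiff.2 ⟨mem_filter.2 ⟨mem_univ _, G₂.2.1 e₂ (by simp [hG₂])⟩, he₂⟩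
  have hmoved : #moved ≤ (M - 1) * (#nonEdges - 1) := calc
    #moved ≤ #((G₁.val.erase e₁ ×ˢ nonEdges.erase e₂).image
        fun p => insert p.2 (G₁.val.erase p.1)) := by
      refine card_le_card_of_injOn (fun X => X.val) (fun X hX => ?_) Subtype.val_injective.injOn
      obtain ⟨hσX, hX⟩ := (mem_filter.1 hX).2
      obtain ⟨a, ha, b, hb, hXab⟩ :=
        exists_eq_insert_erase_of_transportPerm_ne h₁ h₂ he₁ he₂ hG₂ hX hσX
      exact mem_image.2 ⟨(a, b), mem_product.2 ⟨ha, hb⟩, hXab.symm⟩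
    _ ≤ #(G₁.val.erase e₁ ×ˢ nonEdges.erase e₂) := card_image_le
    _ = (M - 1) * (#nonEdges - 1) := by
      rw [card_product, card_erase_of_mem he₁, card_erase_of_mem he₂', G₁.2.2]
  have hM : 0 < M := G₁.2.2 ▸ card_pos.2 ⟨e₁, he₁⟩
  have hk : 0 < #nonEdges := card_pos.2 ⟨e₂, he₂'⟩
  rw [← hchoose, Nat.add_sub_cancel]
  generalize #nonEdges = k at hmoved hk
  obtain ⟨M, rfl⟩ := Nat.exists_eq_add_one_of_ne_zero hM.ne'
  obtain ⟨k, rfl⟩ := Nat.exists_eq_add_one_of_ne_zero hk.ne'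
  simp only [Nat.add_sub_cancel] at hmoved
  nlinarith

end SwapEdges

lemma Wdist_exchangeWalk_le {G₁ G₂ : GraphM n M} (hadj : (exchangeGraph n M).Adj G₁ G₂) :
    Wdist (exchangeGraph n M) (exchangeWalk n M G₁) (exchangeWalk n M G₂) ≤
      1 - n.choose 2 / ((M * (n.choose 2 - M) : ℕ) + 1 : ℝ) := by
  obtain ⟨e₁, he₁, e₂, he₂, hG₂⟩ := exists_eq_insert_erase_of_adj hadj
  have h₁ : ¬e₁.IsDiag := G₁.2.1 e₁ he₁
  have h₂ : ¬e₂.IsDiag := G₂.2.1 e₂ (by simp [hG₂])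
  have hcount := card_moved_add_choose_le h₁ h₂ he₁ he₂ hG₂
  have hK : (0 : ℝ) < (M * (n.choose 2 - M) : ℕ) + 1 := by positivity
  calc Wdist (exchangeGraph n M) (exchangeWalk n M G₁) (exchangeWalk n M G₂)
      ≤ ∑ X with transportPerm G₁ G₂ h₁ h₂ X ≠ X, exchangeWalk n M G₁ X :=
        Wdist_le_sum_moved _ (exchangeWalk_nonneg G₁) _
          (exchangeWalk_transportPerm h₁ h₂ he₁ he₂ hG₂)
          (transportPerm_eq_or_adj h₁ h₂ he₁ he₂ hG₂)
    _ = #{X | transportPerm G₁ G₂ h₁ h₂ X ≠ X ∧ (G₁ = X ∨ (exchangeGraph n M).Adj G₁ X)} /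
          ((M * (n.choose 2 - M) : ℕ) + 1 : ℝ) := by
        simp only [exchangeWalk]
        rw [← sum_filter, filter_filter, sum_const, nsmul_eq_mul, mul_one_div]
    _ ≤ 1 - n.choose 2 / ((M * (n.choose 2 - M) : ℕ) + 1 : ℝ) := by
        rw [le_sub_iff_add_le, ← add_div, div_le_one hK]
        exact_mod_cast hcount

end GraphM

/-- For the lazy uniform random walk on the exchange graph of
`n`-vertex graphs with `M` edges, every pair of adjacent graphs has Ricci curvature
at least `C(n,2)/(M(C(n,2)-M)+1)`. -/
theorem exchangeGraph_ricci_ge (n M : ℕ) :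
    ∀ G₁ G₂ : GraphM n M, (exchangeGraph n M).Adj G₁ G₂ →
      (n.choose 2 : ℝ) / ((M * (n.choose 2 - M) : ℕ) + 1 : ℝ) ≤
        ricci (exchangeGraph n M) (exchangeWalk n M) G₁ G₂ := by
  intro G₁ G₂ hadj
  rw [ricci_eq_of_adj _ _ hadj]
  linarith [GraphM.Wdist_exchangeWalk_le hadj]
end

section
/- Let H be the graph on all labeled n-vertex graphs with G₁ ~ G₂ iff G₁ - v = G₂ - v for some vertex v, equipped with the random walk m_G(G') = (1/n)·Σ_{v: G-v=G'-v} p^{d_{G'}(v)}(1-p)^{n-1-d_{G'}(v)} whose invariant distribution is G(n,p). Then for all G₁, G₂ ∈ V(H), the Ricci curvature satisfies κ(G₁, G₂) ≥ 1/n. -/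
/-!
Ollivier curvature is bounded below by its value on edges: the transport distance satisfies the
triangle inequality (glue two plans along the middle marginal), so `W(m_x, m_y) ≤ (1 - κ) d(x, y)`
follows along a geodesic once it holds for adjacent `x, y`.

The walk from `G` picks a vertex `u` uniformly and redraws the edges at `u` independently with
probability `p`. For `G₁ - v = G₂ - v`, couple the walks from `G₁` and `G₂` by choosing the same
`u` and giving `u` the same new edges in both graphs. For `u = v` the two outcomes coincide; for
`u ≠ v` they still agree after deleting `v`, so they are at distance at most `1`. Hence
`W(m_{G₁}, m_{G₂}) ≤ (n - 1) / n`.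
-/

open Finset

/-- Labeled graphs on `n` vertices, encoded as sets of non-diagonal unordered pairs. -/
def LabGraph (n : ℕ) := {E : Finset (Sym2 (Fin n)) // ∀ e ∈ E, ¬ e.IsDiag}

instance (n : ℕ) : Fintype (LabGraph n) := by unfold LabGraph; infer_instance
instance (n : ℕ) : DecidableEq (LabGraph n) := by unfold LabGraph; infer_instance

/-- Delete a vertex: keep only the edges not containing `v`. -/
def delVert {n : ℕ} (E : Finset (Sym2 (Fin n))) (v : Fin n) : Finset (Sym2 (Fin n)) :=
  E.filter (fun e => v ∉ e)

/-- The degree of `v` in the edge set `E`. -/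
def degVert {n : ℕ} (E : Finset (Sym2 (Fin n))) (v : Fin n) : ℕ :=
  (E.filter (fun e => v ∈ e)).card

/-- The vertex re-randomization graph: `G₁ ~ G₂` iff `G₁ ≠ G₂` and `G₁ - v = G₂ - v`
for some vertex `v`. -/
def vertexGraph (n : ℕ) : SimpleGraph (LabGraph n) where
  Adj G₁ G₂ := G₁ ≠ G₂ ∧ ∃ v : Fin n, delVert G₁.val v = delVert G₂.val v
  symm := ⟨fun _ _ h => ⟨h.1.symm, h.2.imp fun _ hv => hv.symm⟩⟩
  loopless := ⟨fun G h => h.1 rfl⟩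

/-- The `G(n,p)` vertex re-randomization walk:
`m_G(G') = (1/n)·∑_{v : G-v = G'-v} p^{d_{G'}(v)}(1-p)^{n-1-d_{G'}(v)}`. -/
noncomputable def gnpWalk (n : ℕ) (p : ℝ) : LabGraph n → LabGraph n → ℝ :=
  fun G G' => (1 / (n : ℝ)) *
    ∑ v ∈ Finset.univ.filter (fun v : Fin n => delVert G.val v = delVert G'.val v),
      p ^ (degVert G'.val v) * (1 - p) ^ (n - 1 - degVert G'.val v)

/-- The `G(n,p)` distribution `ν(G) = p^{e(G)}(1-p)^{C(n,2)-e(G)}`. -/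
noncomputable def gnpDist (n : ℕ) (p : ℝ) : LabGraph n → ℝ :=
  fun G => p ^ (G.val.card) * (1 - p) ^ (n.choose 2 - G.val.card)

section Transport

variable {V : Type*} [Fintype V] (G : SimpleGraph V)

noncomputable def couplingCost (A : V → V → ℝ) : ℝ :=
  ∑ x, ∑ y, A x y * (G.dist x y : ℝ)

variable {G}

theorem couplingCost_nonneg {m₁ m₂ : V → ℝ} {A : V → V → ℝ} (hA : IsCoupling m₁ m₂ A) :
    0 ≤ couplingCost G A :=
  sum_nonneg fun x _ => sum_nonneg fun y _ => mul_nonneg (hA.1 x y) (Nat.cast_nonneg _)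

theorem Wdist_le_couplingCost {m₁ m₂ : V → ℝ} {A : V → V → ℝ} (hA : IsCoupling m₁ m₂ A) :
    Wdist G m₁ m₂ ≤ couplingCost G A :=
  csInf_le ⟨0, by rintro _ ⟨B, hB, rfl⟩; exact couplingCost_nonneg hB⟩ ⟨A, hA, rfl⟩

theorem le_Wdist {m₁ m₂ : V → ℝ} {a : ℝ} (h : ∃ A, IsCoupling m₁ m₂ A)
    (ha : ∀ A, IsCoupling m₁ m₂ A → a ≤ couplingCost G A) : a ≤ Wdist G m₁ m₂ := by
  obtain ⟨A, hA⟩ := h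
  exact le_csInf ⟨_, A, hA, rfl⟩ (by rintro _ ⟨B, hB, rfl⟩; exact ha B hB)

theorem isCoupling_mul {m₁ m₂ : V → ℝ} (h₁ : IsProbVec m₁) (h₂ : IsProbVec m₂) :
    IsCoupling m₁ m₂ (fun x y => m₁ x * m₂ y) :=
  ⟨fun x y => mul_nonneg (h₁.1 x) (h₂.1 y),
    fun x => by rw [← mul_sum, h₂.2, mul_one], fun y => by rw [← sum_mul, h₁.2, one_mul]⟩

section Pushforward

variable [DecidableEq V] {μ ν : V → ℝ} {f : V → V}

theorem isCoupling_pushforward (hμ : ∀ x, 0 ≤ μ x) (hν : ∀ y, ∑ x with f x = y, μ x = ν y) :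
    IsCoupling μ ν (fun x y => if f x = y then μ x else 0) :=
  ⟨fun x y => by dsimp only; split_ifs <;> simp [hμ x], fun x => by simp,
    fun y => by rw [← hν y, sum_filter]⟩

theorem couplingCost_pushforward :
    couplingCost G (fun x y => if f x = y then μ x else 0) = ∑ x, μ x * (G.dist x (f x) : ℝ) := by
  simp [couplingCost, ite_mul]

end Pushforward

theorem Wdist_self_nonpos {μ : V → ℝ} (hμ : ∀ x, 0 ≤ μ x) : Wdist G μ μ ≤ 0 := by
  classical
  have hA := isCoupling_pushforward (f := id) (ν := μ) hμ (fun y => by simp [sum_filter])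
  simpa [couplingCost_pushforward] using Wdist_le_couplingCost (G := G) hA

section Mixture

variable {ι : Type*} [Fintype ι] {α : ι → ℝ} {μ ν : ι → V → ℝ} {A : ι → V → V → ℝ}

theorem isCoupling_sum (hα : ∀ i, 0 ≤ α i) (hA : ∀ i, IsCoupling (μ i) (ν i) (A i)) :
    IsCoupling (fun x => ∑ i, α i * μ i x) (fun y => ∑ i, α i * ν i y)
      (fun x y => ∑ i, α i * A i x y) := by
  refine ⟨fun x y => sum_nonneg fun i _ => mul_nonneg (hα i) ((hA i).1 x y), fun x => ?_,
    fun y => ?_⟩ <;> rw [sum_comm] <;> simp_rw [← mul_sum]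
  exacts [sum_congr rfl fun i _ => by rw [(hA i).2.1], sum_congr rfl fun i _ => by rw [(hA i).2.2]]

theorem couplingCost_sum :
    couplingCost G (fun x y => ∑ i, α i * A i x y) = ∑ i, α i * couplingCost G (A i) := by
  simp only [couplingCost, Finset.sum_mul, Finset.mul_sum, mul_assoc]
  exact (sum_congr rfl fun _ _ => sum_comm).trans sum_comm

end Mixture

section Gluing

variable {m₁ m₂ m₃ : V → ℝ} {A B : V → V → ℝ}

/-- Where `m` vanishes so do both plans, so the junk value `x / 0 = 0` is the right one. -/
noncomputable def glue (m : V → ℝ) (A B : V → V → ℝ) (x z : V) : ℝ :=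
  ∑ y, A x y * B y z / m y

theorem IsCoupling.eq_zero_of_right_eq_zero (hA : IsCoupling m₁ m₂ A) {y : V} (hy : m₂ y = 0)
    (x : V) : A x y = 0 :=
  (sum_eq_zero_iff_of_nonneg fun x _ => hA.1 x y).1 ((hA.2.2 y).trans hy) x (mem_univ x)

theorem IsCoupling.eq_zero_of_left_eq_zero (hA : IsCoupling m₁ m₂ A) {x : V} (hx : m₁ x = 0)
    (y : V) : A x y = 0 :=
  (sum_eq_zero_iff_of_nonneg fun y _ => hA.1 x y).1 ((hA.2.1 x).trans hx) y (mem_univ y)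

theorem sum_glue_summand_right (hA : IsCoupling m₁ m₂ A) (hB : IsCoupling m₂ m₃ B) (x y : V) :
    ∑ z, A x y * B y z / m₂ y = A x y := by
  by_cases hy : m₂ y = 0
  · simp [hA.eq_zero_of_right_eq_zero hy x]
  · rw [← sum_div, ← mul_sum, hB.2.1 y, mul_div_cancel_right₀ _ hy]

theorem sum_glue_summand_left (hA : IsCoupling m₁ m₂ A) (hB : IsCoupling m₂ m₃ B) (y z : V) :
    ∑ x, A x y * B y z / m₂ y = B y z := by
  by_cases hy : m₂ y = 0
  · simp [hB.eq_zero_of_left_eq_zero hy z]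
  · rw [← sum_div, ← sum_mul, hA.2.2 y, mul_div_cancel_left₀ _ hy]

theorem isCoupling_glue (hA : IsCoupling m₁ m₂ A) (hB : IsCoupling m₂ m₃ B) :
    IsCoupling m₁ m₃ (glue m₂ A B) := by
  have hm₂ : ∀ y, 0 ≤ m₂ y := fun y => hA.2.2 y ▸ sum_nonneg fun x _ => hA.1 x y
  refine ⟨fun x z => sum_nonneg fun y _ =>
    div_nonneg (mul_nonneg (hA.1 x y) (hB.1 y z)) (hm₂ y), fun x => ?_, fun z => ?_⟩ <;>
    simp only [glue] <;> rw [sum_comm]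
  · simp_rw [sum_glue_summand_right hA hB, hA.2.1]
  · simp_rw [sum_glue_summand_left hA hB, hB.2.2]

theorem couplingCost_glue_le (hG : G.Connected) (hA : IsCoupling m₁ m₂ A)
    (hB : IsCoupling m₂ m₃ B) :
    couplingCost G (glue m₂ A B) ≤ couplingCost G A + couplingCost G B := by
  have hm₂ : ∀ y, 0 ≤ m₂ y := fun y => hA.2.2 y ▸ sum_nonneg fun x _ => hA.1 x y
  calc couplingCost G (glue m₂ A B)
      ≤ ∑ x, ∑ z, ∑ y, A x y * B y z / m₂ y * ((G.dist x y : ℝ) + G.dist y z) := by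
        simp only [couplingCost, glue, Finset.sum_mul]
        gcongr with x _ z _ y _
        · exact div_nonneg (mul_nonneg (hA.1 x y) (hB.1 y z)) (hm₂ y)
        · exact_mod_cast hG.dist_triangle
    _ = couplingCost G A + couplingCost G B := by
        simp only [mul_add, sum_add_distrib, couplingCost]
        congr 1
        · refine sum_congr rfl fun x _ => ?_
          rw [sum_comm]
          simp_rw [← sum_mul, sum_glue_summand_right hA hB]
        · rw [sum_comm, sum_congr rfl fun _ _ => sum_comm, sum_comm]
          simp_rw [← sum_mul, sum_glue_summand_left hA hB]

theorem Wdist_triangle (hG : G.Connected) (h₁ : IsProbVec m₁) (h₂ : IsProbVec m₂)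
    (h₃ : IsProbVec m₃) : Wdist G m₁ m₃ ≤ Wdist G m₁ m₂ + Wdist G m₂ m₃ := by
  rw [← sub_le_iff_le_add]
  refine le_Wdist ⟨_, isCoupling_mul h₁ h₂⟩ fun A hA => ?_
  rw [sub_le_iff_le_add, ← sub_le_iff_le_add']
  refine le_Wdist ⟨_, isCoupling_mul h₂ h₃⟩ fun B hB => ?_
  rw [sub_le_iff_le_add']
  exact (Wdist_le_couplingCost (isCoupling_glue hA hB)).trans (couplingCost_glue_le hG hA hB)

end Gluing

section EdgeReduction

variable {m : V → V → ℝ}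

theorem Wdist_le_mul_length (hG : G.Connected) (hm : ∀ x, IsProbVec (m x)) {c : ℝ}
    (hadj : ∀ x y, G.Adj x y → Wdist G (m x) (m y) ≤ c) {x y : V} (w : G.Walk x y) :
    Wdist G (m x) (m y) ≤ c * w.length := by
  induction w with
  | nil => simpa using Wdist_self_nonpos (G := G) (hm _).1
  | @cons x y z h w ih =>
    calc Wdist G (m x) (m z) ≤ Wdist G (m x) (m y) + Wdist G (m y) (m z) :=
          Wdist_triangle hG (hm x) (hm y) (hm z)
      _ ≤ c + c * w.length := add_le_add (hadj x y h) ih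
      _ = c * (w.cons h).length := by simp only [SimpleGraph.Walk.length_cons]; push_cast; ring

theorem le_ricci_of_forall_adj (hG : G.Connected) (hm : ∀ x, IsProbVec (m x)) {κ : ℝ}
    (hκ : κ ≤ 1) (hadj : ∀ x y, G.Adj x y → Wdist G (m x) (m y) ≤ 1 - κ) (x y : V) :
    κ ≤ ricci G m x y := by
  obtain rfl | hxy := eq_or_ne x y
  · simpa [ricci] using hκ
  obtain ⟨w, hw⟩ := hG.exists_walk_length_eq_dist x y
  have hd : (0 : ℝ) < G.dist x y := by exact_mod_cast hG.pos_dist_of_ne hxy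
  have hW := Wdist_le_mul_length hG hm hadj w
  rw [hw] at hW
  rw [ricci, le_sub_comm, div_le_iff₀ hd]
  exact hW

end EdgeReduction

end Transport

section EdgeSets

variable {n : ℕ}

def edgesAt (E : Finset (Sym2 (Fin n))) (u : Fin n) : Finset (Sym2 (Fin n)) :=
  E.filter (u ∈ ·)

theorem card_edgesAt (E : Finset (Sym2 (Fin n))) (u : Fin n) :
    #(edgesAt E u) = degVert E u := rfl

theorem delVert_union_edgesAt (E : Finset (Sym2 (Fin n))) (u : Fin n) :
    delVert E u ∪ edgesAt E u = E := by
  rw [delVert, edgesAt, union_comm, filter_union_filter_not_eq]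

theorem eq_iff_delVert_eq_and_edgesAt_eq {E F : Finset (Sym2 (Fin n))} (u : Fin n) :
    E = F ↔ delVert E u = delVert F u ∧ edgesAt E u = edgesAt F u :=
  ⟨by rintro rfl; simp, fun ⟨h₁, h₂⟩ => by
    rw [← delVert_union_edgesAt E u, h₁, h₂, delVert_union_edgesAt]⟩

theorem delVert_delVert_union {E S : Finset (Sym2 (Fin n))} {u : Fin n} (hS : ∀ e ∈ S, u ∈ e) :
    delVert (delVert E u ∪ S) u = delVert E u := by
  ext e
  simp only [delVert, mem_filter, mem_union]
  have := hS e
  tauto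

theorem edgesAt_delVert_union {E S : Finset (Sym2 (Fin n))} {u : Fin n} (hS : ∀ e ∈ S, u ∈ e) :
    edgesAt (delVert E u ∪ S) u = S := by
  ext e
  simp only [delVert, edgesAt, mem_filter, mem_union]
  have := hS e
  tauto

end EdgeSets

namespace LabGraph

variable {n : ℕ}

theorem val_inj {G H : LabGraph n} : G.val = H.val ↔ G = H := Subtype.val_inj

def empty (n : ℕ) : LabGraph n := ⟨∅, by simp⟩

def rewire (B : LabGraph n) (u : Fin n) (H : LabGraph n) : LabGraph n :=
  ⟨delVert B.val u ∪ edgesAt H.val u, by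
    simp only [mem_union, delVert, edgesAt, mem_filter]
    rintro e (he | he)
    exacts [B.prop e he.1, H.prop e he.1]⟩

@[simp]
theorem delVert_rewire (B : LabGraph n) (u : Fin n) (H : LabGraph n) :
    delVert (B.rewire u H).val u = delVert B.val u :=
  delVert_delVert_union fun _ he => (mem_filter.1 he).2

@[simp]
theorem edgesAt_rewire (B : LabGraph n) (u : Fin n) (H : LabGraph n) :
    edgesAt (B.rewire u H).val u = edgesAt H.val u :=
  edgesAt_delVert_union fun _ he => (mem_filter.1 he).2

@[simp]
theorem degVert_rewire (B : LabGraph n) (u : Fin n) (H : LabGraph n) :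
    degVert (B.rewire u H).val u = degVert H.val u := by
  rw [← card_edgesAt, edgesAt_rewire, card_edgesAt]

theorem eq_rewire_iff {B H H' : LabGraph n} {u : Fin n} :
    H = B.rewire u H' ↔ delVert H.val u = delVert B.val u ∧ edgesAt H.val u = edgesAt H'.val u := by
  rw [← val_inj, eq_iff_delVert_eq_and_edgesAt_eq u, delVert_rewire, edgesAt_rewire]

theorem rewire_eq_self_iff {B H : LabGraph n} {u : Fin n} :
    B.rewire u H = H ↔ delVert B.val u = delVert H.val u := by
  rw [eq_comm, eq_rewire_iff, eq_comm]
  exact and_iff_left rfl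

theorem rewire_rewire (B C H : LabGraph n) (u : Fin n) :
    B.rewire u (C.rewire u H) = B.rewire u H :=
  val_inj.1 (congrArg (delVert B.val u ∪ ·) (edgesAt_rewire C u H))

theorem delVert_rewire_of_delVert_eq {G₁ G₂ H : LabGraph n} {u v : Fin n}
    (hu : delVert G₁.val u = delVert H.val u) (hv : delVert G₁.val v = delVert G₂.val v) :
    delVert (G₂.rewire u H).val v = delVert H.val v := by
  simp only [Finset.ext_iff, rewire, delVert, edgesAt, mem_filter, mem_union] at hu hv ⊢
  intro e
  have := hu e
  have := hv e
  by_cases hue : u ∈ e <;> by_cases hve : v ∈ e <;> tauto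


theorem vertexGraph_adj_or_eq_of_delVert_eq {G H : LabGraph n} {v : Fin n}
    (h : delVert G.val v = delVert H.val v) : (vertexGraph n).Adj G H ∨ G = H := by
  by_cases hGH : G = H
  exacts [.inr hGH, .inl ⟨hGH, v, h⟩]

theorem dist_le_one_of_delVert_eq {G H : LabGraph n} {v : Fin n}
    (h : delVert G.val v = delVert H.val v) : (vertexGraph n).dist G H ≤ 1 := by
  rcases vertexGraph_adj_or_eq_of_delVert_eq h with hadj | rfl
  exacts [(SimpleGraph.dist_eq_one_iff_adj.2 hadj).le, by simp]

theorem reachable_empty (G : LabGraph n) : (vertexGraph n).Reachable G (empty n) := by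
  induction hk : #G.val using Nat.strong_induction_on generalizing G with
  | _ k ih =>
  obtain hG | ⟨e, he⟩ := G.val.eq_empty_or_nonempty
  · obtain rfl : G = empty n := val_inj.1 hG
    rfl
  set G' := G.rewire e.out.1 (empty n)
  have hG' : G'.val = delVert G.val e.out.1 := by simp [G', rewire, edgesAt, empty]
  have hlt : #G'.val < k := hk ▸ hG' ▸
    card_lt_card (filter_ssubset.2 ⟨e, he, not_not.2 e.out_fst_mem⟩)
  have hGG' : (vertexGraph n).Reachable G G' := by
    rcases vertexGraph_adj_or_eq_of_delVert_eq (delVert_rewire G e.out.1 (empty n)).symm with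
      hadj | heq
    exacts [hadj.reachable, heq ▸ .rfl]
  exact hGG'.trans (ih _ hlt G' rfl)

theorem vertexGraph_connected (n : ℕ) : (vertexGraph n).Connected :=
  (SimpleGraph.connected_iff _).2
    ⟨fun G H => (reachable_empty G).trans (reachable_empty H).symm, ⟨empty n⟩⟩


noncomputable def resample (p : ℝ) (G : LabGraph n) (u : Fin n) (H : LabGraph n) : ℝ :=
  if delVert G.val u = delVert H.val u then
    p ^ degVert H.val u * (1 - p) ^ (n - 1 - degVert H.val u)
  else 0

theorem resample_nonneg (hp0 : 0 ≤ p) (hp1 : p ≤ 1) (G : LabGraph n) (u : Fin n)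
    (H : LabGraph n) : 0 ≤ resample p G u H := by
  unfold resample
  split_ifs
  exacts [mul_nonneg (pow_nonneg hp0 _) (pow_nonneg (sub_nonneg.2 hp1) _), le_rfl]

theorem sum_delVert_eq_sum_powerset {M : Type*} [AddCommMonoid M] (G : LabGraph n) (u : Fin n)
    (f : Finset (Sym2 (Fin n)) → M) :
    ∑ H : LabGraph n with delVert G.val u = delVert H.val u, f (edgesAt H.val u) =
      ∑ S ∈ ((⊤ : SimpleGraph (Fin n)).incidenceFinset u).powerset, f S := by
  have hT (e : Sym2 (Fin n)) : e ∈ (⊤ : SimpleGraph (Fin n)).incidenceFinset u ↔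
      ¬ e.IsDiag ∧ u ∈ e := by
    simp [SimpleGraph.incidenceSet]
  have hsub {S} (hS : S ∈ ((⊤ : SimpleGraph (Fin n)).incidenceFinset u).powerset) :
      ∀ e ∈ S, ¬ e.IsDiag ∧ u ∈ e :=
    fun e he => (hT e).1 (mem_powerset.1 hS he)
  refine sum_bij' (fun H _ => edgesAt H.val u)
    (fun S hS => (⟨delVert G.val u ∪ S, ?_⟩ : LabGraph n)) ?_ ?_ ?_ ?_ (fun _ _ => rfl)
  · rintro e he
    rcases mem_union.1 he with he | he
    exacts [G.prop e (mem_filter.1 he).1, (hsub hS e he).1]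
  · intro H _
    refine mem_powerset.2 fun e he => ?_
    exact (hT e).2 ⟨H.prop e (mem_filter.1 he).1, (mem_filter.1 he).2⟩
  · intro S hS
    exact mem_filter.2 ⟨mem_univ _, (delVert_delVert_union fun e he => (hsub hS e he).2).symm⟩
  · intro H hH
    refine val_inj.1 ?_
    change delVert G.val u ∪ edgesAt H.val u = H.val
    rw [(mem_filter.1 hH).2, delVert_union_edgesAt]
  · intro S hS
    exact edgesAt_delVert_union fun e he => (hsub hS e he).2

theorem sum_resample (p : ℝ) (G : LabGraph n) (u : Fin n) : ∑ H, resample p G u H = 1 := by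
  have hcard : #((⊤ : SimpleGraph (Fin n)).incidenceFinset u) = n - 1 := by simp
  calc ∑ H, resample p G u H
      = ∑ H : LabGraph n with delVert G.val u = delVert H.val u,
          p ^ #(edgesAt H.val u) * (1 - p) ^ (n - 1 - #(edgesAt H.val u)) := by
        rw [sum_filter]
        rfl
    _ = (p + (1 - p)) ^ (n - 1) := by
        rw [sum_delVert_eq_sum_powerset G u (fun S => p ^ #S * (1 - p) ^ (n - 1 - #S)),
          ← hcard, sum_pow_mul_eq_add_pow]
    _ = 1 := by rw [add_sub_cancel, one_pow]

theorem sum_resample_rewire (G₁ G₂ : LabGraph n) (u : Fin n) (H₂ : LabGraph n) :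
    ∑ H with G₂.rewire u H = H₂, resample p G₁ u H = resample p G₂ u H₂ := by
  rw [sum_filter, sum_eq_single (G₁.rewire u H₂)]
  · simp [resample, rewire_rewire, rewire_eq_self_iff]
  · intro H _ hne
    unfold resample
    split_ifs with h₂ h₁
    · exact absurd (eq_rewire_iff.2 ⟨h₁.symm, by rw [← h₂, edgesAt_rewire]⟩) hne
    all_goals rfl
  · exact fun h => absurd (mem_univ _) h

theorem gnpWalk_eq_sum_resample (p : ℝ) (G : LabGraph n) :
    gnpWalk n p G = fun H => ∑ u, 1 / (n : ℝ) * resample p G u H := by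
  funext H
  rw [gnpWalk, ← mul_sum, sum_filter]
  rfl

theorem isProbVec_gnpWalk (hn : 0 < n) (hp0 : 0 ≤ p) (hp1 : p ≤ 1) (G : LabGraph n) :
    IsProbVec (gnpWalk n p G) := by
  rw [gnpWalk_eq_sum_resample]
  refine ⟨fun H => sum_nonneg fun u _ =>
    mul_nonneg (by positivity) (resample_nonneg hp0 hp1 G u H), ?_⟩
  rw [sum_comm]
  simp_rw [← mul_sum, sum_resample]
  field_simp
  simp

theorem couplingCost_rewire_le (hp0 : 0 ≤ p) (hp1 : p ≤ 1) {G₁ G₂ : LabGraph n} {v : Fin n}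
    (hv : delVert G₁.val v = delVert G₂.val v) (u : Fin n) :
    couplingCost (vertexGraph n)
        (fun H₁ H₂ => if G₂.rewire u H₁ = H₂ then resample p G₁ u H₁ else 0) ≤
      if u = v then 0 else 1 := by
  rw [couplingCost_pushforward]
  split_ifs with huv
  · subst huv
    refine (sum_eq_zero fun H _ => ?_).le
    unfold resample
    split_ifs with hH
    · simp [rewire_eq_self_iff.2 (hv.symm.trans hH)]
    · simp
  · refine (sum_le_sum fun H _ => ?_).trans (sum_resample p G₁ u).le
    by_cases hH : delVert G₁.val u = delVert H.val u
    · refine mul_le_of_le_one_right (resample_nonneg hp0 hp1 G₁ u H) ?_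
      exact_mod_cast dist_le_one_of_delVert_eq (delVert_rewire_of_delVert_eq hH hv).symm
    · simp [resample, hH]

theorem Wdist_gnpWalk_le_of_adj (hn : 0 < n) (hp0 : 0 ≤ p) (hp1 : p ≤ 1) {G₁ G₂ : LabGraph n}
    (h : (vertexGraph n).Adj G₁ G₂) :
    Wdist (vertexGraph n) (gnpWalk n p G₁) (gnpWalk n p G₂) ≤ 1 - 1 / (n : ℝ) := by
  obtain ⟨-, v, hv⟩ := h
  set A : Fin n → LabGraph n → LabGraph n → ℝ :=
    fun u H₁ H₂ => if G₂.rewire u H₁ = H₂ then resample p G₁ u H₁ else 0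
  have hA (u : Fin n) : IsCoupling (resample p G₁ u) (resample p G₂ u) (A u) :=
    isCoupling_pushforward (resample_nonneg hp0 hp1 G₁ u) (sum_resample_rewire G₁ G₂ u)
  have hcoup := isCoupling_sum (α := fun _ => 1 / (n : ℝ)) (fun _ => by positivity) hA
  rw [← gnpWalk_eq_sum_resample, ← gnpWalk_eq_sum_resample] at hcoup
  calc Wdist (vertexGraph n) (gnpWalk n p G₁) (gnpWalk n p G₂)
      ≤ ∑ u, 1 / (n : ℝ) * couplingCost (vertexGraph n) (A u) :=
        (Wdist_le_couplingCost hcoup).trans_eq couplingCost_sum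
    _ ≤ ∑ u : Fin n, 1 / (n : ℝ) * if u = v then 0 else 1 := by
        gcongr with u
        exact couplingCost_rewire_le hp0 hp1 hv u
    _ = 1 - 1 / (n : ℝ) := by
        have hn' : (n : ℝ) ≠ 0 := by positivity
        simp [sum_ite, filter_ne', Nat.cast_sub hn]
        field_simp

end LabGraph

/-- The vertex re-randomization walk on labeled `n`-vertex graphs
(whose invariant distribution is `G(n,p)`) has Ricci curvature at least `1/n` for
all pairs of graphs. -/
theorem gnp_ricci_ge (n : ℕ) (hn : 0 < n) (p : ℝ) (hp0 : 0 < p) (hp1 : p < 1) :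
    ∀ G₁ G₂ : LabGraph n,
      (1 : ℝ) / (n : ℝ) ≤ ricci (vertexGraph n) (gnpWalk n p) G₁ G₂ :=
  le_ricci_of_forall_adj (LabGraph.vertexGraph_connected n)
    (LabGraph.isProbVec_gnpWalk hn hp0.le hp1.le)
    (div_le_one_of_le₀ (by exact_mod_cast hn) (Nat.cast_nonneg n))
    fun _ _ => LabGraph.Wdist_gnpWalk_le_of_adj hn hp0.le hp1.le
end
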